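/- Fix d ≥ 2 and distinct m₁, m₂ ∈ ℕ₀, and set ν_i = m_i + d/2 − 1. Then the set of σ ∈ ℝ for which the equations z J'_{ν₁}(z)/J_{ν₁}(z) = d/2 − 1 − σ and z J'_{ν₂}(z)/J_{ν₂}(z) = d/2 − 1 − σ possess a common positive root is at most countable. -/

import Mathlib

/-- The Bessel function of the first kind of (real) order `ν`,
`J_ν(z) = Σ_{k≥0} (-1)^k (z/2)^{2k+ν} / (k! Γ(k+ν+1))`. -/
noncomputable def besselJ (ν : ℝ) (z : ℝ) : ℝ :=
  ∑' k : ℕ, ((-1 : ℝ) ^ k / (Nat.factorial k * Real.Gamma (k + ν + 1))) *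
    (z / 2) ^ (2 * (k : ℝ) + ν)

/-- `z` is a positive root of the equation `z J'_ν(z)/J_ν(z) = c`, i.e. `z > 0`,
`J_ν(z) ≠ 0` and `z J'_ν(z) = c J_ν(z)`. -/
def IsPosRobinBesselRoot (ν c z : ℝ) : Prop :=
  0 < z ∧ besselJ ν z ≠ 0 ∧ z * deriv (besselJ ν) z = c * besselJ ν z

/-!
Write `J_ν(z) = (z/2)^ν G_ν(z/2)` with `G_ν(x) = Σ_k c_k x^{2k}` entire, so that
`z J'_ν(z) = (z/2)^ν (ν G_ν + x G_ν')(z/2)`. If `z` is a positive root of both equations with the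
same constant, then `x = z/2` is a zero of the entire function
`(ν₁ G₁ + x G₁') G₂ - (ν₂ G₂ + x G₂') G₁`, whose value `(ν₁ - ν₂) / (Γ(ν₁+1) Γ(ν₂+1))` at `0` is
nonzero. Its zeros are therefore isolated, hence countably many, and `σ` is recovered from the
common root as `d/2 - 1 - z J'_{ν₁}(z) / J_{ν₁}(z)`.
-/

open Filter Topology Set

theorem AnalyticOnNhd.countable_setOf_eq_zero {𝕜 E : Type*} [NontriviallyNormedField 𝕜]
    [PreconnectedSpace 𝕜] [SecondCountableTopology 𝕜] [NormedAddCommGroup E] [NormedSpace 𝕜 E]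
    {f : 𝕜 → E} (hf : AnalyticOnNhd 𝕜 f univ) {x₀ : 𝕜} (hx₀ : f x₀ ≠ 0) :
    {x | f x = 0}.Countable := by
  have hcodiscrete : ∀ᶠ x in codiscreteWithin univ, f x ≠ 0 :=
    (hf.eqOn_zero_or_eventually_ne_zero_of_preconnected isPreconnected_univ).resolve_left
      fun h => hx₀ (h (mem_univ x₀))
  simpa using (HereditarilyLindelofSpace.isLindelof _).countable_of_isDiscrete
    (isDiscrete_of_codiscreteWithin (s := {x | f x = 0}) hcodiscrete)

noncomputable def besselCoeff (ν : ℝ) (k : ℕ) : ℝ :=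
  (-1) ^ k / (k.factorial * Real.Gamma (k + ν + 1))

section Coefficients

variable {ν : ℝ}

lemma Gamma_natCast_add_add_one_pos (hν : -1 < ν) (k : ℕ) : 0 < Real.Gamma (k + ν + 1) :=
  Real.Gamma_pos_of_pos (by linarith [k.cast_nonneg (α := ℝ)])

lemma besselCoeff_ne_zero (hν : -1 < ν) (k : ℕ) : besselCoeff ν k ≠ 0 :=
  div_ne_zero (pow_ne_zero _ (by norm_num))
    (mul_ne_zero (by positivity) (Gamma_natCast_add_add_one_pos hν k).ne')

lemma norm_besselCoeff_succ_div (hν : -1 < ν) (k : ℕ) :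
    ‖besselCoeff ν (k + 1)‖ / ‖besselCoeff ν k‖ = ((k + 1) * (k + ν + 1))⁻¹ := by
  have hΓ := Gamma_natCast_add_add_one_pos hν k
  have hk : 0 < (k : ℝ) + ν + 1 := by linarith [k.cast_nonneg (α := ℝ)]
  have hΓ_succ : Real.Gamma ((k + 1 : ℕ) + ν + 1) = (k + ν + 1) * Real.Gamma (k + ν + 1) := by
    rw [← Real.Gamma_add_one hk.ne']
    push_cast
    ring_nf
  simp only [besselCoeff, norm_div, norm_pow, norm_neg, norm_one, one_pow, norm_mul,
    Real.norm_natCast, Real.norm_of_nonneg hΓ.le, Real.norm_of_nonneg hk.le, hΓ_succ,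
    Nat.factorial_succ]
  push_cast
  field_simp

lemma radius_ofScalars_besselCoeff (hν : -1 < ν) :
    (FormalMultilinearSeries.ofScalars ℝ (besselCoeff ν)).radius = ⊤ := by
  refine FormalMultilinearSeries.ofScalars_radius_eq_top_of_tendsto _ _
    (.of_forall (besselCoeff_ne_zero hν)) ?_
  simp only [Nat.succ_eq_add_one, norm_besselCoeff_succ_div hν]
  have hk : Tendsto (fun k : ℕ => (k : ℝ)) atTop atTop := tendsto_natCast_atTop_atTop
  exact tendsto_inv_atTop_zero.comp <| (tendsto_atTop_add_const_right _ _ hk).atTop_mul_atTop₀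
    (tendsto_atTop_add_const_right _ _ (tendsto_atTop_add_const_right _ _ hk))

end Coefficients

noncomputable def besselG (ν x : ℝ) : ℝ :=
  FormalMultilinearSeries.ofScalarsSum (E := ℝ) (besselCoeff ν) (x ^ 2)

lemma besselG_zero (ν : ℝ) : besselG ν 0 = (Real.Gamma (ν + 1))⁻¹ := by
  simp [besselG, FormalMultilinearSeries.ofScalarsSum_zero, besselCoeff]

lemma analyticOnNhd_besselG {ν : ℝ} (hν : -1 < ν) : AnalyticOnNhd ℝ (besselG ν) univ := by
  have hsum := (FormalMultilinearSeries.ofScalars ℝ (besselCoeff ν)).analyticOnNhd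
  rw [radius_ofScalars_besselCoeff hν, Metric.eball_top] at hsum
  exact hsum.comp (analyticOnNhd_id.pow 2) (mapsTo_univ _ _)

lemma besselJ_eq_besselG_mul_rpow (ν : ℝ) {z : ℝ} (hz : 0 < z) :
    besselJ ν z = besselG ν (z / 2) * (z / 2) ^ ν := by
  rw [besselG, FormalMultilinearSeries.ofScalars_sum_eq, ← tsum_mul_right, besselJ]
  refine tsum_congr fun k => ?_
  rw [show 2 * (k : ℝ) + ν = (2 * k : ℕ) + ν by push_cast; ring,
    Real.rpow_add (half_pos hz), Real.rpow_natCast, smul_eq_mul, pow_mul, besselCoeff, mul_assoc]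

/-- `θ(x^ν G_ν(x)) = x^ν besselThetaG ν x` for the Euler operator `θ = x d/dx`. -/
noncomputable def besselThetaG (ν x : ℝ) : ℝ :=
  ν * besselG ν x + x * deriv (besselG ν) x

lemma analyticOnNhd_besselThetaG {ν : ℝ} (hν : -1 < ν) :
    AnalyticOnNhd ℝ (besselThetaG ν) univ :=
  (analyticOnNhd_const.mul (analyticOnNhd_besselG hν)).add
    (analyticOnNhd_id.mul (analyticOnNhd_besselG hν).deriv)

lemma mul_deriv_besselJ {ν z : ℝ} (hν : -1 < ν) (hz : 0 < z) :
    z * deriv (besselJ ν) z = besselThetaG ν (z / 2) * (z / 2) ^ ν := by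
  have hx : 0 < z / 2 := half_pos hz
  have hG : HasDerivAt (fun w => besselG ν (w / 2)) (deriv (besselG ν) (z / 2) * (1 / 2)) z :=
    (analyticOnNhd_besselG hν _ trivial).differentiableAt.hasDerivAt.comp z
      ((hasDerivAt_id z).div_const 2)
  have hpow : HasDerivAt (fun w => (w / 2) ^ ν) (1 / 2 * ν * (z / 2) ^ (ν - 1)) z :=
    ((hasDerivAt_id z).div_const 2).rpow_const (Or.inl hx.ne')
  have hprod : HasDerivAt (fun w => besselG ν (w / 2) * (w / 2) ^ ν) _ z := hG.mul hpow
  have hJ : besselJ ν =ᶠ[𝓝 z] fun w => besselG ν (w / 2) * (w / 2) ^ ν :=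
    eventually_of_mem (Ioi_mem_nhds hz) fun w hw => besselJ_eq_besselG_mul_rpow ν hw
  have hrpow : (z / 2) ^ ν = (z / 2) ^ (ν - 1) * (z / 2) := by
    rw [← Real.rpow_add_one hx.ne', sub_add_cancel]
  rw [hJ.deriv_eq, hprod.deriv, besselThetaG, hrpow]
  ring

lemma IsPosRobinBesselRoot.besselThetaG_eq {ν c z : ℝ} (hν : -1 < ν)
    (h : IsPosRobinBesselRoot ν c z) : besselThetaG ν (z / 2) = c * besselG ν (z / 2) := by
  obtain ⟨hz, -, hroot⟩ := h
  rw [mul_deriv_besselJ hν hz, besselJ_eq_besselG_mul_rpow ν hz, ← mul_assoc] at hroot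
  exact mul_right_cancel₀ (Real.rpow_pos_of_pos (half_pos hz) ν).ne' hroot

lemma IsPosRobinBesselRoot.eq_mul_deriv_div {ν c z : ℝ} (h : IsPosRobinBesselRoot ν c z) :
    c = z * deriv (besselJ ν) z / besselJ ν z :=
  eq_div_of_mul_eq h.2.1 h.2.2.symm

noncomputable def besselCross (ν₁ ν₂ x : ℝ) : ℝ :=
  besselThetaG ν₁ x * besselG ν₂ x - besselThetaG ν₂ x * besselG ν₁ x

section Cross

variable {ν₁ ν₂ : ℝ} (h₁ : -1 < ν₁) (h₂ : -1 < ν₂)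
include h₁ h₂

lemma analyticOnNhd_besselCross : AnalyticOnNhd ℝ (besselCross ν₁ ν₂) univ :=
  ((analyticOnNhd_besselThetaG h₁).mul (analyticOnNhd_besselG h₂)).sub
    ((analyticOnNhd_besselThetaG h₂).mul (analyticOnNhd_besselG h₁))

lemma besselCross_zero_ne_zero (hne : ν₁ ≠ ν₂) : besselCross ν₁ ν₂ 0 ≠ 0 := by
  have hΓ₁ := Real.Gamma_pos_of_pos (by linarith : 0 < ν₁ + 1)
  have hΓ₂ := Real.Gamma_pos_of_pos (by linarith : 0 < ν₂ + 1)
  have hcross : besselCross ν₁ ν₂ 0 =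
      (ν₁ - ν₂) * ((Real.Gamma (ν₁ + 1))⁻¹ * (Real.Gamma (ν₂ + 1))⁻¹) := by
    simp only [besselCross, besselThetaG, besselG_zero, zero_mul, add_zero]
    ring
  rw [hcross]
  exact mul_ne_zero (sub_ne_zero.2 hne) (by positivity)

lemma besselCross_eq_zero_of_common_root {c z : ℝ} (hr₁ : IsPosRobinBesselRoot ν₁ c z)
    (hr₂ : IsPosRobinBesselRoot ν₂ c z) : besselCross ν₁ ν₂ (z / 2) = 0 := by
  rw [besselCross, hr₁.besselThetaG_eq h₁, hr₂.besselThetaG_eq h₂]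
  ring

end Cross

/-- Fix `d ≥ 2` and distinct `m₁, m₂ ∈ ℕ₀`, and set `ν_i = m_i + d/2 - 1`.
The set of `σ ∈ ℝ` for which the equations `z J'_{ν₁}(z)/J_{ν₁}(z) = d/2 - 1 - σ` and
`z J'_{ν₂}(z)/J_{ν₂}(z) = d/2 - 1 - σ` have a common positive root is at most countable. -/
theorem countable_bad_sigma (d : ℕ) (hd : 2 ≤ d) (m₁ m₂ : ℕ) (hm : m₁ ≠ m₂) :
    {σ : ℝ | ∃ z : ℝ,
        IsPosRobinBesselRoot ((m₁ : ℝ) + d / 2 - 1) ((d : ℝ) / 2 - 1 - σ) z ∧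
        IsPosRobinBesselRoot ((m₂ : ℝ) + d / 2 - 1) ((d : ℝ) / 2 - 1 - σ) z}.Countable := by
  have hν (m : ℕ) : -1 < (m : ℝ) + d / 2 - 1 := by
    have : (2 : ℝ) ≤ d := by exact_mod_cast hd
    linarith [m.cast_nonneg (α := ℝ)]
  set ν₁ : ℝ := (m₁ : ℝ) + d / 2 - 1
  set ν₂ : ℝ := (m₂ : ℝ) + d / 2 - 1
  have hne : ν₁ ≠ ν₂ := by simpa [ν₁, ν₂] using hm
  have hzeros : {z : ℝ | besselCross ν₁ ν₂ (z / 2) = 0}.Countable :=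
    ((analyticOnNhd_besselCross (hν m₁) (hν m₂)).countable_setOf_eq_zero
      (besselCross_zero_ne_zero (hν m₁) (hν m₂) hne)).preimage
      fun _ _ h => (div_left_inj' two_ne_zero).1 h
  apply (hzeros.image fun z => (d : ℝ) / 2 - 1 - z * deriv (besselJ ν₁) z / besselJ ν₁ z).mono
  rintro σ ⟨z, hr₁, hr₂⟩
  refine ⟨z, besselCross_eq_zero_of_common_root (hν m₁) (hν m₂) hr₁ hr₂, ?_⟩
  dsimp only
  rw [← hr₁.eq_mul_deriv_div]
  ring
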